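/- Let X be a real or complex Banach space with the Daugavet property, let Y be a Banach space, and let T : X → Y be a hereditary-SCD-operator, i.e. a bounded linear operator such that every convex subset of T(B_X) is an SCD set. Then T is narrow: for every x, y in the unit sphere S_X, every ε > 0, and every slice S of the closed unit ball B_X with y ∈ S, there is z ∈ S such that ‖x + z‖ ≥ 2 − ε and ‖T(y) − T(z)‖ < ε. -/

import Mathlib

set_option maxHeartbeats 2000000


open Bornology Metric Topology

/-- The slice of a set `A` determined by the functional `f` and `ε`:
`S(A,f,ε) = {x ∈ A | Re f(x) > sup_{a ∈ A} Re f(a) - ε}`. -/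
def Slice (𝕜 : Type*) [RCLike 𝕜] {X : Type*} [SeminormedAddCommGroup X] [NormedSpace 𝕜 X]
    (A : Set X) (f : X →L[𝕜] 𝕜) (ε : ℝ) : Set X :=
  {x ∈ A | sSup ((fun a => RCLike.re (f a)) '' A) - ε < RCLike.re (f x)}

/-- `S` is a slice of `A`. -/
def IsSlice (𝕜 : Type*) [RCLike 𝕜] {X : Type*} [SeminormedAddCommGroup X] [NormedSpace 𝕜 X]
    (A S : Set X) : Prop :=
  ∃ (f : X →L[𝕜] 𝕜) (ε : ℝ), 0 < ε ∧ S = Slice 𝕜 A f ε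

/-- A countable family `V` of subsets of `A` is determining for `A`:
`A` is contained in the closed convex hull of any `B ⊆ A` meeting every `V n`. -/
def Determining {X : Type*} [SeminormedAddCommGroup X] [NormedSpace ℝ X]
    (A : Set X) (V : ℕ → Set X) : Prop :=
  ∀ B ⊆ A, (∀ n, (B ∩ V n).Nonempty) → A ⊆ closure (convexHull ℝ B)

/-- `A` is a slicely countably determined set: there is a determining sequence of
slices of `A`. -/
def IsSCD (𝕜 : Type*) [RCLike 𝕜] {X : Type*} [SeminormedAddCommGroup X] [NormedSpace ℝ X]
    [NormedSpace 𝕜 X] (A : Set X) : Prop :=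
  ∃ S : ℕ → Set X, (∀ n, IsSlice 𝕜 A (S n)) ∧ Determining A S

/-- `X` has the Daugavet property: every rank-one operator `x ↦ f(x) • y`
satisfies the Daugavet equation `‖Id + T‖ = 1 + ‖T‖`. -/
def DaugavetProperty (𝕜 : Type*) [RCLike 𝕜] (X : Type*) [NormedAddCommGroup X]
    [NormedSpace 𝕜 X] : Prop :=
  ∀ (f : X →L[𝕜] 𝕜) (y : X),
    ‖ContinuousLinearMap.id 𝕜 X + f.smulRight y‖ = 1 + ‖f.smulRight y‖



open RCLike in
private lemma norm_ge_sub {X : Type*} [NormedAddCommGroup X] (A B : X) :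
    ‖A‖ - ‖B‖ ≤ ‖A + B‖ := by
  have h := norm_add_le (A + B) (-B)
  simp only [add_neg_cancel_right, norm_neg] at h
  linarith

open RCLike in
private lemma claimD {𝕜 : Type*} [RCLike 𝕜] {X : Type*} [NormedAddCommGroup X]
    [NormedSpace ℝ X] [NormedSpace 𝕜 X] [IsScalarTower ℝ 𝕜 X] (hDP : DaugavetProperty 𝕜 X) (b : X) (hb : b ≠ 0)
    (ψ : X →L[𝕜] 𝕜) (τ η : ℝ) (hη : 0 < η)
    (hne : ∃ z, ‖z‖ ≤ 1 ∧ τ < re (ψ z)) :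
    ∃ w : X, ‖w‖ ≤ 1 ∧ τ < re (ψ w) ∧ ‖b‖ + 1 - η ≤ ‖b + w‖ := by
  obtain ⟨z₀, hz₀, hτ⟩ := hne
  have hbpos : (0:ℝ) < ‖b‖ := norm_pos_iff.2 hb
  set e : X := ‖b‖⁻¹ • b with he
  have hee : ‖e‖ = 1 := by
    rw [he, norm_smul, norm_inv, norm_norm, inv_mul_cancel₀ (ne_of_gt hbpos)]
  have hbe : b = ‖b‖ • e := by
    rw [he, smul_smul, mul_inv_cancel₀ (ne_of_gt hbpos), one_smul]
  by_cases hψ : ψ = 0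
  · refine ⟨e, le_of_eq hee, ?_, ?_⟩
    · simpa [hψ] using hτ
    · have hbee : b + e = (1 + ‖b‖⁻¹) • b := by rw [add_smul, one_smul, he]
      have h0 : (0:ℝ) ≤ 1 + ‖b‖⁻¹ := by positivity
      rw [hbee, norm_smul, Real.norm_of_nonneg h0]
      have h1 : ‖b‖⁻¹ * ‖b‖ = 1 := inv_mul_cancel₀ (ne_of_gt hbpos)
      nlinarith
  · have hψn : (0:ℝ) < ‖ψ‖ := norm_pos_iff.2 hψ
    have hτψ : τ < ‖ψ‖ := by
      calc τ < re (ψ z₀) := hτ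
      _ ≤ ‖ψ z₀‖ := le_trans (le_abs_self _) (abs_re_le_norm _)
      _ ≤ ‖ψ‖ * ‖z₀‖ := ψ.le_opNorm z₀
      _ ≤ ‖ψ‖ := by nlinarith
    set ψ' : X →L[𝕜] 𝕜 := ((‖ψ‖⁻¹ : ℝ) : 𝕜) • ψ with hψ'
    have hψ'n : ‖ψ'‖ = 1 := by
      have hns := norm_smul ((‖ψ‖⁻¹ : ℝ) : 𝕜) ψ
      rw [hψ', hns, RCLike.norm_ofReal, abs_of_pos (inv_pos.2 hψn),
        inv_mul_cancel₀ (ne_of_gt hψn)]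
    set τ' : ℝ := ‖ψ‖⁻¹ * τ with hτ'
    have hτ'1 : τ' < 1 := by
      rw [hτ']
      calc ‖ψ‖⁻¹ * τ < ‖ψ‖⁻¹ * ‖ψ‖ := mul_lt_mul_of_pos_left hτψ (inv_pos.2 hψn)
      _ = 1 := inv_mul_cancel₀ (ne_of_gt hψn)
    set η₁ : ℝ := min (min ((1 - τ')/2) (1/2)) (η/(2*(‖b‖+1))) with hη₁def
    have hη₁pos : 0 < η₁ :=
      lt_min (lt_min (by linarith) (by norm_num)) (by positivity)
    have h1 : η₁ ≤ (1-τ')/2 := le_trans (min_le_left _ _) (min_le_left _ _)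
    have h2 : η₁ ≤ 1/2 := le_trans (min_le_left _ _) (min_le_right _ _)
    have h3 : η₁ ≤ η/(2*(‖b‖+1)) := min_le_right _ _
    have hDPe := hDP ψ' e
    have hsr : ‖ψ'.smulRight e‖ = 1 := by
      rw [ContinuousLinearMap.norm_smulRight_apply, hψ'n, hee, one_mul]
    have hA : (2:ℝ) - η₁ < ‖ContinuousLinearMap.id 𝕜 X + ψ'.smulRight e‖ := by
      rw [hDPe, hsr]; linarith
    obtain ⟨v, hv1, hv2⟩ := ContinuousLinearMap.exists_lt_apply_of_lt_opNorm _ hA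
    rw [ContinuousLinearMap.add_apply, ContinuousLinearMap.id_apply,
        ContinuousLinearMap.smulRight_apply] at hv2
    have hζub : ‖ψ' v‖ ≤ 1 := by
      calc ‖ψ' v‖ ≤ ‖ψ'‖ * ‖v‖ := ψ'.le_opNorm v
      _ ≤ 1 := by rw [hψ'n, one_mul]; exact le_of_lt hv1
    have hζlb : 1 - η₁ < ‖ψ' v‖ := by
      have hest : ‖v + ψ' v • e‖ ≤ ‖v‖ + ‖ψ' v‖ := by
        calc ‖v + ψ' v • e‖ ≤ ‖v‖ + ‖ψ' v • e‖ := norm_add_le _ _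
        _ = ‖v‖ + ‖ψ' v‖ := by rw [norm_smul, hee, mul_one]
      nlinarith
    have hζne : ψ' v ≠ 0 := by
      intro h; rw [h, norm_zero] at hζlb; linarith
    set ζ : 𝕜 := ψ' v with hζ
    have hζnorm : (0:ℝ) < ‖ζ‖ := norm_pos_iff.2 hζne
    set θ : 𝕜 := (starRingEnd 𝕜) ζ / ((‖ζ‖ : ℝ) : 𝕜) with hθ
    have hζk : ((‖ζ‖:ℝ) : 𝕜) ≠ 0 := by
      simp only [ne_eq, ofReal_eq_zero]
      exact ne_of_gt hζnorm
    have hθζ : θ * ζ = ((‖ζ‖:ℝ) : 𝕜) := by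
      rw [hθ, div_mul_eq_mul_div, RCLike.conj_mul, sq]
      field_simp
    have hθn : ‖θ‖ = 1 := by
      rw [hθ, norm_div, RCLike.norm_conj, RCLike.norm_ofReal, abs_of_pos hζnorm,
        div_self (ne_of_gt hζnorm)]
    set w : X := θ • v with hw
    have hwn : ‖w‖ ≤ 1 := by
      rw [hw, norm_smul, hθn, one_mul]; exact le_of_lt hv1
    have hψ'w : ψ' w = ((‖ζ‖:ℝ) : 𝕜) := by
      rw [hw, map_smul, smul_eq_mul, ← hζ, hθζ]
    have hreτ : τ < re (ψ w) := by
      have hψw : ψ w = ((‖ψ‖ : ℝ) : 𝕜) * ψ' w := by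
        rw [hψ', ContinuousLinearMap.smul_apply, smul_eq_mul, ← mul_assoc,
          ← RCLike.ofReal_mul, mul_inv_cancel₀ (ne_of_gt hψn)]
        simp
      rw [hψw, hψ'w, ← RCLike.ofReal_mul, ofReal_re]
      have hτζ : τ' < ‖ζ‖ := by nlinarith
      calc τ = ‖ψ‖ * τ' := by rw [hτ']; field_simp
      _ < ‖ψ‖ * ‖ζ‖ := mul_lt_mul_of_pos_left hτζ hψn
    have hwe : 2 - 2*η₁ ≤ ‖e + w‖ := by
      have h1' : ‖w + (‖ζ‖:ℝ) • e‖ = ‖v + ζ • e‖ := by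
        have hth : θ • (v + ζ • e) = w + (‖ζ‖:ℝ) • e := by
          rw [smul_add, ← hw, smul_smul, hθζ, RCLike.real_smul_eq_coe_smul (K := 𝕜)]
        rw [← hth, norm_smul, hθn, one_mul]
      have hsplit : e + w = (w + (‖ζ‖:ℝ) • e) + (1 - ‖ζ‖) • e := by
        rw [sub_smul, one_smul]; abel
      have hlow := norm_ge_sub (w + (‖ζ‖:ℝ) • e) ((1 - ‖ζ‖) • e)
      rw [← hsplit] at hlow
      have hsm : ‖(1 - ‖ζ‖) • e‖ = 1 - ‖ζ‖ := by
        rw [norm_smul, hee, mul_one, Real.norm_of_nonneg (by linarith)]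
      rw [h1', hsm] at hlow
      linarith
    refine ⟨w, hwn, hreτ, ?_⟩
    rcases le_total ‖b‖ 1 with hble | hbge
    · have hsplit : b + w = (e + w) + (‖b‖ - 1) • e := by
        rw [sub_smul, one_smul, ← hbe]; abel
      have hlow := norm_ge_sub (e + w) ((‖b‖ - 1) • e)
      rw [← hsplit] at hlow
      have hsm : ‖(‖b‖ - 1) • e‖ = 1 - ‖b‖ := by
        rw [norm_smul, hee, mul_one, Real.norm_eq_abs, abs_of_nonpos (by linarith),
          neg_sub]
      rw [hsm] at hlow
      have h3' : η₁ * (2*(‖b‖+1)) ≤ η := (le_div_iff₀ (by positivity)).mp h3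
      nlinarith
    · have hsplit : b + w = ‖b‖ • (e + w) + (1 - ‖b‖) • w := by
        rw [smul_add, sub_smul, one_smul, ← hbe]; abel
      have hlow := norm_ge_sub (‖b‖ • (e + w)) ((1 - ‖b‖) • w)
      rw [← hsplit] at hlow
      have hsm1 : ‖‖b‖ • (e + w)‖ = ‖b‖ * ‖e + w‖ := by
        rw [norm_smul, Real.norm_of_nonneg (le_of_lt hbpos)]
      have hsm2 : ‖(1 - ‖b‖) • w‖ ≤ ‖b‖ - 1 := by
        rw [norm_smul, Real.norm_eq_abs, abs_of_nonpos (by linarith), neg_sub]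
        calc (‖b‖ - 1) * ‖w‖ ≤ (‖b‖ - 1) * 1 :=
              mul_le_mul_of_nonneg_left hwn (by linarith)
        _ = ‖b‖ - 1 := mul_one _
      rw [hsm1] at hlow
      have h3' : η₁ * (2*(‖b‖+1)) ≤ η := (le_div_iff₀ (by positivity)).mp h3
      have hprod : ‖b‖ * (2 - 2*η₁) ≤ ‖b‖ * ‖e + w‖ :=
        mul_le_mul_of_nonneg_left hwe (le_of_lt hbpos)
      have hbig : 2*‖b‖*η₁ ≤ η := by
        have h4 : η₁ * (2*‖b‖) ≤ η₁ * (2*(‖b‖+1)) :=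
          mul_le_mul_of_nonneg_left (by linarith) (le_of_lt hη₁pos)
        linarith
      linarith


private lemma uniq2 {S T e f : ℝ} (hdet : S * f - T * e ≠ 0) (z z' : ℝ × ℝ)
    (h1 : S * z.1 + T * z.2 = S * z'.1 + T * z'.2)
    (h2 : e * z.1 + f * z.2 = e * z'.1 + f * z'.2) : z = z' := by
  have hp : z.1 = z'.1 := by
    have h3 : (S*f - T*e) * (z.1 - z'.1)
        = f*((S*z.1+T*z.2) - (S*z'.1+T*z'.2)) - T*((e*z.1+f*z.2) - (e*z'.1+f*z'.2)) := by
      ring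
    rw [h1, h2] at h3
    simp only [sub_self, mul_zero, sub_zero] at h3
    rcases mul_eq_zero.mp h3 with h | h
    · exact absurd h hdet
    · linarith
  have hq : z.2 = z'.2 := by
    have h3 : (S*f - T*e) * (z.2 - z'.2)
        = S*((e*z.1+f*z.2) - (e*z'.1+f*z'.2)) - e*((S*z.1+T*z.2) - (S*z'.1+T*z'.2)) := by
      ring
    rw [h1, h2] at h3
    simp only [sub_self, mul_zero, sub_zero] at h3
    rcases mul_eq_zero.mp h3 with h | h
    · exact absurd h hdet
    · linarith
  exact Prod.ext hp hq

private lemma smallSlice (K : Set (ℝ × ℝ)) (hK : IsCompact K)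
    (S T e f m : ℝ) (w : ℝ × ℝ) (hw : w ∈ K)
    (hdet : S * f - T * e ≠ 0)
    (hm : ∀ z ∈ K, S * z.1 + T * z.2 ≤ m) (hwm : S * w.1 + T * w.2 = m)
    (hface : ∀ z ∈ K, S * z.1 + T * z.2 = m → e * z.1 + f * z.2 ≤ e * w.1 + f * w.2)
    (η : ℝ) (hη : 0 < η) :
    ∃ p q M ρ : ℝ, 0 < ρ ∧ (∃ z ∈ K, p * z.1 + q * z.2 = M) ∧
      (∀ z ∈ K, p * z.1 + q * z.2 ≤ M) ∧
      ∀ z ∈ K, M - ρ < p * z.1 + q * z.2 → ‖z - w‖ < η := by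
  have hcont : ∀ (α β : ℝ), Continuous (fun z : ℝ × ℝ => α * z.1 + β * z.2) := fun α β =>
    (continuous_const.mul continuous_fst).add (continuous_const.mul continuous_snd)
  set dw := e * w.1 + f * w.2 with hdw
  have hν : ∃ ν : ℝ, 0 < ν ∧ ν ≤ 1 ∧ ∀ z ∈ K,
      m - ν ≤ S * z.1 + T * z.2 → dw - ν ≤ e * z.1 + f * z.2 → ‖z - w‖ < η := by
    by_contra hcon
    push_neg at hcon
    set G : ℕ → Set (ℝ × ℝ) := fun k =>
      {z | z ∈ K ∧ m - 1/(k+1) ≤ S * z.1 + T * z.2 ∧ dw - 1/(k+1) ≤ e * z.1 + f * z.2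
        ∧ η ≤ ‖z - w‖} with hG
    have hGcl : ∀ k, IsClosed (G k) := by
      intro k
      have : G k = K ∩ ({z | m - 1/(k+1) ≤ S * z.1 + T * z.2}
          ∩ ({z | dw - 1/(k+1) ≤ e * z.1 + f * z.2} ∩ {z | η ≤ ‖z - w‖})) := by
        ext z; simp [hG, Set.mem_setOf_eq]; tauto
      rw [this]
      refine hK.isClosed.inter (IsClosed.inter ?_ (IsClosed.inter ?_ ?_))
      · exact isClosed_le continuous_const (hcont S T)
      · exact isClosed_le continuous_const (hcont e f)
      · exact isClosed_le continuous_const ((continuous_id.sub continuous_const).norm)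
    have hGne : ∀ k, (G k).Nonempty := by
      intro k
      have hk1 : (0:ℝ) < 1/((k:ℝ)+1) := by positivity
      have hk2 : 1/((k:ℝ)+1) ≤ 1 := by
        rw [div_le_one (by positivity)]
        have : (0:ℝ) ≤ (k:ℝ) := Nat.cast_nonneg k
        linarith
      obtain ⟨z, hzK, h1, h2, h3⟩ := hcon (1/((k:ℝ)+1)) hk1 hk2
      exact ⟨z, hzK, h1, h2, h3⟩
    have hGsub : ∀ k, G (k+1) ⊆ G k := by
      intro k z hz
      obtain ⟨hzK, h1, h2, h3⟩ := hz
      have hmono : 1/((k:ℝ)+1+1) ≤ 1/((k:ℝ)+1) :=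
        one_div_le_one_div_of_le (by positivity) (by linarith)
      refine ⟨hzK, ?_, ?_, h3⟩
      · push_cast at h1 ⊢; linarith
      · push_cast at h2 ⊢; linarith
    have hGc : ∀ k, G k ⊆ K := fun k z hz => hz.1
    have h0cpt : IsCompact (G 0) := hK.of_isClosed_subset (hGcl 0) (hGc 0)
    obtain ⟨zs, hzs⟩ : (⋂ k, G k).Nonempty :=
      IsCompact.nonempty_iInter_of_sequence_nonempty_isCompact_isClosed G hGsub hGne h0cpt hGcl
    have hzsk : ∀ k : ℕ, zs ∈ G k := fun k => Set.mem_iInter.mp hzs k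
    have hzsK : zs ∈ K := (hzsk 0).1
    have hζzs : S * zs.1 + T * zs.2 = m := by
      refine le_antisymm (hm zs hzsK) ?_
      by_contra hlt
      push_neg at hlt
      obtain ⟨k, hk⟩ := exists_nat_one_div_lt (by linarith : (0:ℝ) < m - (S * zs.1 + T * zs.2))
      have := (hzsk k).2.1
      push_cast at this hk
      linarith
    have hdzs : e * zs.1 + f * zs.2 = dw := by
      refine le_antisymm (hface zs hzsK hζzs) ?_
      by_contra hlt
      push_neg at hlt
      obtain ⟨k, hk⟩ := exists_nat_one_div_lt (by linarith : (0:ℝ) < dw - (e * zs.1 + f * zs.2))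
      have := (hzsk k).2.2.1
      push_cast at this hk
      linarith
    have hzw : zs = w := uniq2 hdet zs w (by rw [hζzs, hwm]) (by rw [hdzs])
    have := (hzsk 0).2.2.2
    rw [hzw, sub_self, norm_zero] at this
    linarith
  obtain ⟨ν, hν0, hν1, hνprop⟩ := hν
  obtain ⟨R, hR⟩ := isBounded_iff_forall_norm_le.mp hK.isBounded
  have hR0 : 0 ≤ R := le_trans (norm_nonneg w) (hR w hw)
  set D : ℝ := (|e| + |f|) * R + |dw| + 1 with hD
  have hD1 : 1 ≤ D := by
    have h0 : 0 ≤ (|e| + |f|) * R := by positivity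
    have h0' : 0 ≤ |dw| := abs_nonneg _
    rw [hD]; linarith
  have hDb : ∀ z ∈ K, e * z.1 + f * z.2 ≤ dw + D := by
    intro z hz
    have hz1 : |z.1| ≤ R := by
      rw [← Real.norm_eq_abs]
      exact le_trans (norm_fst_le z) (hR z hz)
    have hz2 : |z.2| ≤ R := by
      rw [← Real.norm_eq_abs]
      exact le_trans (norm_snd_le z) (hR z hz)
    have h1 : e * z.1 + f * z.2 ≤ |e| * R + |f| * R := by
      have a1 : e * z.1 ≤ |e| * R := by
        calc e * z.1 ≤ |e * z.1| := le_abs_self _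
        _ = |e| * |z.1| := abs_mul _ _
        _ ≤ |e| * R := mul_le_mul_of_nonneg_left hz1 (abs_nonneg _)
      have a2 : f * z.2 ≤ |f| * R := by
        calc f * z.2 ≤ |f * z.2| := le_abs_self _
        _ = |f| * |z.2| := abs_mul _ _
        _ ≤ |f| * R := mul_le_mul_of_nonneg_left hz2 (abs_nonneg _)
      linarith
    have h2 : -|dw| ≤ dw := neg_abs_le _
    rw [hD]; linarith [abs_nonneg dw]
  set r : ℝ := ν/(2*(D+1)) with hr
  have hr0 : 0 < r := by rw [hr]; positivity
  have hrId : r * (2*(D+1)) = ν := by rw [hr]; field_simp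
  set ρ : ℝ := r*ν/2 with hρ
  have hρ0 : 0 < ρ := by rw [hρ]; positivity
  set p : ℝ := S + r*e with hp
  set q : ℝ := T + r*f with hq
  obtain ⟨zM, hzMK, hzMmax⟩ := hK.exists_isMaxOn ⟨w, hw⟩ ((hcont p q).continuousOn)
  refine ⟨p, q, p * zM.1 + q * zM.2, ρ, hρ0, ⟨zM, hzMK, rfl⟩, fun z hz => hzMmax hz, ?_⟩
  intro z hz hslice
  set M := p * zM.1 + q * zM.2 with hM
  have hMw : m + r*dw ≤ M := by
    have h := hzMmax hw
    simp only [Set.mem_setOf_eq] at h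
    calc m + r * dw = p * w.1 + q * w.2 := by rw [hp, hq, hdw, ← hwm]; ring
    _ ≤ p * zM.1 + q * zM.2 := h
    _ = M := hM.symm
  have hA : S * z.1 + T * z.2 ≤ m := hm z hz
  have hBzD : e * z.1 + f * z.2 ≤ dw + D := hDb z hz
  have hexp : p * z.1 + q * z.2 = (S * z.1 + T * z.2) + r * (e * z.1 + f * z.2) := by
    rw [hp, hq]; ring
  rw [hexp] at hslice
  have hd : dw - ν ≤ e * z.1 + f * z.2 := by
    have h1 : r * (e * z.1 + f * z.2) > r * dw - ρ := by linarith
    have h2 : r * (dw - ν/2) < r * (e * z.1 + f * z.2) := by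
      rw [hρ] at h1; nlinarith
    have h3 := (mul_lt_mul_iff_right₀ hr0).mp h2
    linarith
  have hζz : m - ν ≤ S * z.1 + T * z.2 := by
    have hρrD : ρ + r*D ≤ ν := by
      rw [hρ]
      nlinarith [hrId, hr0, hν1, hD1]
    nlinarith
  exact hνprop z hz hζz hd

private lemma twoD (K : Set (ℝ × ℝ)) (hK : IsCompact K) (hKc : Convex ℝ K)
    (v : ℝ × ℝ) (hv : v ∈ K) (a c : ℝ) (ha : a < v.1) (hc : c < v.2) :
    ∃ (p₁ q₁ M₁ ρ₁ p₂ q₂ M₂ ρ₂ μ : ℝ), 0 < ρ₁ ∧ 0 < ρ₂ ∧ 0 ≤ μ ∧ μ ≤ 1 ∧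
      (∃ z ∈ K, p₁ * z.1 + q₁ * z.2 = M₁) ∧ (∀ z ∈ K, p₁ * z.1 + q₁ * z.2 ≤ M₁) ∧
      (∃ z ∈ K, p₂ * z.1 + q₂ * z.2 = M₂) ∧ (∀ z ∈ K, p₂ * z.1 + q₂ * z.2 ≤ M₂) ∧
      ∀ z₁ ∈ K, ∀ z₂ ∈ K, M₁ - ρ₁ < p₁ * z₁.1 + q₁ * z₁.2 →
        M₂ - ρ₂ < p₂ * z₂.1 + q₂ * z₂.2 →
        a < (1-μ) * z₁.1 + μ * z₂.1 ∧ c < (1-μ) * z₁.2 + μ * z₂.2 := by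
  classical
  have hcont : ∀ (α β : ℝ), Continuous (fun z : ℝ × ℝ => α * z.1 + β * z.2) := fun α β =>
    (continuous_const.mul continuous_fst).add (continuous_const.mul continuous_snd)
  -- Step 1: maximize z.1 + z.2 on the dominating corner
  set K' : Set (ℝ × ℝ) := K ∩ ({z | v.1 ≤ z.1} ∩ {z | v.2 ≤ z.2}) with hK'
  have hK'cpt : IsCompact K' := by
    apply hK.inter_right
    exact (isClosed_le continuous_const continuous_fst).inter
      (isClosed_le continuous_const continuous_snd)
  have hK'ne : K'.Nonempty := ⟨v, hv, le_refl v.1, le_refl v.2⟩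
  obtain ⟨w, hwK', hwmax⟩ := hK'cpt.exists_isMaxOn hK'ne
    ((continuous_fst.add continuous_snd).continuousOn)
  obtain ⟨hwK, hwv1, hwv2⟩ := hwK'
  -- Step 2: separating functional
  set P : Set (ℝ × ℝ) := {z | w.1 < z.1 ∧ w.2 < z.2} with hP
  have hPopen : IsOpen P := (isOpen_lt continuous_const continuous_fst).inter
    (isOpen_lt continuous_const continuous_snd)
  have hPconv : Convex ℝ P := by
    have l1 : IsLinearMap ℝ (fun z : ℝ × ℝ => z.1) := ⟨fun _ _ => rfl, fun _ _ => rfl⟩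
    have l2 : IsLinearMap ℝ (fun z : ℝ × ℝ => z.2) := ⟨fun _ _ => rfl, fun _ _ => rfl⟩
    exact (convex_halfSpace_gt l1 w.1).inter (convex_halfSpace_gt l2 w.2)
  have hdisj : Disjoint P K := by
    rw [Set.disjoint_left]
    intro z hzP hzK
    obtain ⟨h1, h2⟩ := hzP
    have hzK' : z ∈ K' := ⟨hzK, le_of_lt (lt_of_le_of_lt hwv1 h1),
      le_of_lt (lt_of_le_of_lt hwv2 h2)⟩
    have := hwmax hzK'
    simp only [Set.mem_setOf_eq, Pi.add_apply] at this
    linarith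
  obtain ⟨F, u, hFP, hFK⟩ := geometric_hahn_banach_open hPconv hPopen hKc hdisj
  set s₀ : ℝ := F (1, 0) with hs₀def
  set t₀ : ℝ := F (0, 1) with ht₀def
  have hdecomp : ∀ z : ℝ × ℝ, F z = z.1 * s₀ + z.2 * t₀ := by
    intro z
    have hzeq : z = z.1 • ((1:ℝ), (0:ℝ)) + z.2 • ((0:ℝ), (1:ℝ)) := by
      apply Prod.ext <;> simp
    calc F z = F (z.1 • ((1:ℝ), (0:ℝ)) + z.2 • ((0:ℝ), (1:ℝ))) := by rw [← hzeq]
    _ = z.1 * s₀ + z.2 * t₀ := by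
        rw [map_add, map_smul, map_smul, smul_eq_mul, smul_eq_mul, hs₀def, ht₀def]
  have hs₀ : s₀ ≤ 0 := by
    by_contra hpos
    push_neg at hpos
    set N : ℝ := max 1 ((u - F w - t₀)/s₀ + 1) with hN
    have hN1 : (1:ℝ) ≤ N := le_max_left _ _
    have hNgt : (u - F w - t₀)/s₀ < N := lt_of_lt_of_le (by linarith) (le_max_right _ _)
    have hzP : (w.1 + N, w.2 + 1) ∈ P :=
      ⟨by change w.1 < w.1 + N; linarith, by change w.2 < w.2 + 1; linarith⟩
    have hlt := hFP _ hzP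
    rw [hdecomp] at hlt
    simp only at hlt
    have hmul : u - (w.1 * s₀ + w.2 * t₀) - t₀ < N * s₀ := by
      have h2 := (div_lt_iff₀ hpos).mp hNgt
      rw [hdecomp w] at h2
      linarith
    nlinarith
  have ht₀ : t₀ ≤ 0 := by
    by_contra hpos
    push_neg at hpos
    set N : ℝ := max 1 ((u - F w - s₀)/t₀ + 1) with hN
    have hN1 : (1:ℝ) ≤ N := le_max_left _ _
    have hNgt : (u - F w - s₀)/t₀ < N := lt_of_lt_of_le (by linarith) (le_max_right _ _)
    have hzP : (w.1 + 1, w.2 + N) ∈ P :=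
      ⟨by change w.1 < w.1 + 1; linarith, by change w.2 < w.2 + N; linarith⟩
    have hlt := hFP _ hzP
    rw [hdecomp] at hlt
    simp only at hlt
    have hmul : u - (w.1 * s₀ + w.2 * t₀) - s₀ < N * t₀ := by
      have h2 := (div_lt_iff₀ hpos).mp hNgt
      rw [hdecomp w] at h2
      linarith
    nlinarith
  have hFw : F w ≤ u := by
    by_contra hgt
    push_neg at hgt
    set εq : ℝ := (F w - u)/(|s₀| + |t₀| + 1) with hεq
    have hεqpos : 0 < εq := by rw [hεq]; exact div_pos (by linarith) (by positivity)
    have hzP : (w.1 + εq, w.2 + εq) ∈ P := ⟨by simp [hεqpos], by simp [hεqpos]⟩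
    have hlt := hFP _ hzP
    rw [hdecomp] at hlt
    simp only at hlt
    rw [hdecomp w] at hgt
    have h1 : s₀ ≥ -|s₀| := neg_abs_le _
    have h2 : t₀ ≥ -|t₀| := neg_abs_le _
    have h3 : εq * (|s₀| + |t₀| + 1) = F w - u := by rw [hεq]; field_simp
    rw [hdecomp w] at h3
    nlinarith
  set S : ℝ := -s₀ with hSdef
  set Tc : ℝ := -t₀ with hTdef
  set m : ℝ := S * w.1 + Tc * w.2 with hmdef
  have hsupp : ∀ z ∈ K, S * z.1 + Tc * z.2 ≤ m := by
    intro z hz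
    have h1 := hFK z hz
    rw [hdecomp z] at h1
    rw [hmdef, hSdef, hTdef]
    rw [hdecomp w] at hFw
    nlinarith
  have hST : 0 < S * S + Tc * Tc := by
    rcases eq_or_ne S 0 with hS | hS
    · rcases eq_or_ne Tc 0 with hT | hT
      · exfalso
        have hF0 : ∀ z : ℝ × ℝ, F z = 0 := by
          intro z
          rw [hdecomp z]
          have : s₀ = 0 := by rw [hSdef] at hS; linarith
          have ht : t₀ = 0 := by rw [hTdef] at hT; linarith
          rw [this, ht]; ring
        have h1 := hFP (w.1 + 1, w.2 + 1) ⟨by simp, by simp⟩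
        have h2 := hFK v hv
        rw [hF0] at h1 h2
        linarith
      · have := mul_self_pos.mpr hT
        nlinarith [mul_self_nonneg S]
    · have := mul_self_pos.mpr hS
      nlinarith [mul_self_nonneg Tc]
  -- Step 3: the face and its endpoints
  set Fc : Set (ℝ × ℝ) := {z | z ∈ K ∧ S * z.1 + Tc * z.2 = m} with hFc
  have hFccpt : IsCompact Fc := by
    have : Fc = K ∩ {z | S * z.1 + Tc * z.2 = m} := by ext z; simp [hFc, Set.mem_setOf_eq]
    rw [this]
    exact hK.inter_right (isClosed_eq (hcont S Tc) continuous_const)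
  have hwFc : w ∈ Fc := ⟨hwK, rfl⟩
  obtain ⟨w₂, hw₂Fc, hw₂max⟩ := hFccpt.exists_isMaxOn ⟨w, hwFc⟩ ((hcont (-Tc) S).continuousOn)
  obtain ⟨w₁, hw₁Fc, hw₁max⟩ := hFccpt.exists_isMaxOn ⟨w, hwFc⟩ ((hcont Tc (-S)).continuousOn)
  have hw₁K : w₁ ∈ K := hw₁Fc.1
  have hw₂K : w₂ ∈ K := hw₂Fc.1
  have hw₁m : S * w₁.1 + Tc * w₁.2 = m := hw₁Fc.2
  have hw₂m : S * w₂.1 + Tc * w₂.2 = m := hw₂Fc.2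
  -- d-values
  set d1 : ℝ := -Tc * w₁.1 + S * w₁.2 with hd1
  set d2 : ℝ := -Tc * w₂.1 + S * w₂.2 with hd2
  set dw : ℝ := -Tc * w.1 + S * w.2 with hdwd
  have hd1w : d1 ≤ dw := by
    have := hw₁max hwFc
    simp only [Set.mem_setOf_eq] at this
    rw [hd1, hdwd]; linarith
  have hdw2 : dw ≤ d2 := by
    have := hw₂max hwFc
    simp only [Set.mem_setOf_eq] at this
    rw [hd2, hdwd]; linarith
  set μ : ℝ := if d2 - d1 = 0 then 0 else (dw - d1)/(d2 - d1) with hμdef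
  have hd12 : d1 ≤ d2 := le_trans hd1w hdw2
  have hμ0 : 0 ≤ μ := by
    rw [hμdef]
    split_ifs with h
    · exact le_refl 0
    · have hpos : 0 < d2 - d1 := lt_of_le_of_ne (by linarith) (Ne.symm h)
      exact div_nonneg (by linarith) (le_of_lt hpos)
  have hμ1 : μ ≤ 1 := by
    rw [hμdef]
    split_ifs with h
    · norm_num
    · have hpos : 0 < d2 - d1 := lt_of_le_of_ne (by linarith) (Ne.symm h)
      rw [div_le_one hpos]; linarith
  have hμd : (1-μ) * d1 + μ * d2 = dw := by
    rw [hμdef]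
    split_ifs with h
    · simp; linarith
    · have hpos : d2 - d1 ≠ 0 := h
      field_simp
      ring
  -- w is the μ-combination of w₁ and w₂
  have hwcomb : w = ((1-μ) * w₁.1 + μ * w₂.1, (1-μ) * w₁.2 + μ * w₂.2) := by
    have hdet2 : S * S - Tc * (-Tc) ≠ 0 := by nlinarith
    have e1 : (1-μ) * (S * w₁.1 + Tc * w₁.2) + μ * (S * w₂.1 + Tc * w₂.2)
        = S * w.1 + Tc * w.2 := by rw [hw₁m, hw₂m]; ring
    have e2 : (1-μ) * (-Tc * w₁.1 + S * w₁.2) + μ * (-Tc * w₂.1 + S * w₂.2)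
        = -Tc * w.1 + S * w.2 := by rw [← hd1, ← hd2, ← hdwd]; exact hμd
    apply uniq2 hdet2
    · simp only
      rw [← e1]; ring
    · simp only
      rw [← e2]; ring
  -- margins
  set η : ℝ := min (w.1 - a) (w.2 - c) / 2 with hηdef
  have hwa : a < w.1 := lt_of_lt_of_le ha hwv1
  have hwc : c < w.2 := lt_of_lt_of_le hc hwv2
  have hη0 : 0 < η := by
    rw [hηdef]
    have : 0 < min (w.1 - a) (w.2 - c) := lt_min (by linarith) (by linarith)
    linarith
  have hηa : η < w.1 - a := by
    rw [hηdef]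
    have h1 : min (w.1 - a) (w.2 - c) ≤ w.1 - a := min_le_left _ _
    have : 0 < min (w.1 - a) (w.2 - c) := lt_min (by linarith) (by linarith)
    linarith
  have hηc : η < w.2 - c := by
    rw [hηdef]
    have h1 : min (w.1 - a) (w.2 - c) ≤ w.2 - c := min_le_right _ _
    have : 0 < min (w.1 - a) (w.2 - c) := lt_min (by linarith) (by linarith)
    linarith
  -- small slices around w₁ and w₂
  have hface1 : ∀ z ∈ K, S * z.1 + Tc * z.2 = m → Tc * z.1 + (-S) * z.2 ≤ Tc * w₁.1 + (-S) * w₁.2 := by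
    intro z hz hzm
    have := hw₁max (⟨hz, hzm⟩ : z ∈ Fc)
    simp only [Set.mem_setOf_eq] at this
    linarith
  have hface2 : ∀ z ∈ K, S * z.1 + Tc * z.2 = m → (-Tc) * z.1 + S * z.2 ≤ (-Tc) * w₂.1 + S * w₂.2 := by
    intro z hz hzm
    have := hw₂max (⟨hz, hzm⟩ : z ∈ Fc)
    simp only [Set.mem_setOf_eq] at this
    linarith
  obtain ⟨p₁, q₁, M₁, ρ₁, hρ₁, hM₁ex, hM₁le, hsl₁⟩ :=
    smallSlice K hK S Tc Tc (-S) m w₁ hw₁K (by nlinarith) hsupp hw₁m hface1 η hη0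
  obtain ⟨p₂, q₂, M₂, ρ₂, hρ₂, hM₂ex, hM₂le, hsl₂⟩ :=
    smallSlice K hK S Tc (-Tc) S m w₂ hw₂K (by nlinarith) hsupp hw₂m hface2 η hη0
  refine ⟨p₁, q₁, M₁, ρ₁, p₂, q₂, M₂, ρ₂, μ, hρ₁, hρ₂, hμ0, hμ1, hM₁ex, hM₁le, hM₂ex, hM₂le, ?_⟩
  intro z₁ hz₁ z₂ hz₂ hs₁ hs₂
  have hn₁ : ‖z₁ - w₁‖ < η := hsl₁ z₁ hz₁ hs₁
  have hn₂ : ‖z₂ - w₂‖ < η := hsl₂ z₂ hz₂ hs₂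
  have hab1 : |z₁.1 - w₁.1| ≤ ‖z₁ - w₁‖ := by
    rw [← Real.norm_eq_abs]
    exact le_trans (le_of_eq (by rw [Prod.fst_sub])) (norm_fst_le (z₁ - w₁))
  have hab2 : |z₂.1 - w₂.1| ≤ ‖z₂ - w₂‖ := by
    rw [← Real.norm_eq_abs]
    exact le_trans (le_of_eq (by rw [Prod.fst_sub])) (norm_fst_le (z₂ - w₂))
  have hab1' : |z₁.2 - w₁.2| ≤ ‖z₁ - w₁‖ := by
    rw [← Real.norm_eq_abs]
    exact le_trans (le_of_eq (by rw [Prod.snd_sub])) (norm_snd_le (z₁ - w₁))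
  have hab2' : |z₂.2 - w₂.2| ≤ ‖z₂ - w₂‖ := by
    rw [← Real.norm_eq_abs]
    exact le_trans (le_of_eq (by rw [Prod.snd_sub])) (norm_snd_le (z₂ - w₂))
  have hc1 : |(1-μ) * z₁.1 + μ * z₂.1 - w.1| ≤ η := by
    have hw1 : w.1 = (1-μ) * w₁.1 + μ * w₂.1 := by rw [hwcomb]
    rw [hw1]
    have heq : (1-μ) * z₁.1 + μ * z₂.1 - ((1-μ) * w₁.1 + μ * w₂.1)
        = (1-μ) * (z₁.1 - w₁.1) + μ * (z₂.1 - w₂.1) := by ring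
    rw [heq]
    calc |(1-μ) * (z₁.1 - w₁.1) + μ * (z₂.1 - w₂.1)|
        ≤ |(1-μ) * (z₁.1 - w₁.1)| + |μ * (z₂.1 - w₂.1)| := abs_add_le _ _
    _ = (1-μ) * |z₁.1 - w₁.1| + μ * |z₂.1 - w₂.1| := by
        rw [abs_mul, abs_mul, abs_of_nonneg (by linarith : (0:ℝ) ≤ 1 - μ), abs_of_nonneg hμ0]
    _ ≤ (1-μ) * η + μ * η := by
        apply add_le_add
        · exact mul_le_mul_of_nonneg_left (le_of_lt (lt_of_le_of_lt hab1 hn₁)) (by linarith)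
        · exact mul_le_mul_of_nonneg_left (le_of_lt (lt_of_le_of_lt hab2 hn₂)) hμ0
    _ = η := by ring
  have hc2 : |(1-μ) * z₁.2 + μ * z₂.2 - w.2| ≤ η := by
    have hw2 : w.2 = (1-μ) * w₁.2 + μ * w₂.2 := by rw [hwcomb]
    rw [hw2]
    have heq : (1-μ) * z₁.2 + μ * z₂.2 - ((1-μ) * w₁.2 + μ * w₂.2)
        = (1-μ) * (z₁.2 - w₁.2) + μ * (z₂.2 - w₂.2) := by ring
    rw [heq]
    calc |(1-μ) * (z₁.2 - w₁.2) + μ * (z₂.2 - w₂.2)|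
        ≤ |(1-μ) * (z₁.2 - w₁.2)| + |μ * (z₂.2 - w₂.2)| := abs_add_le _ _
    _ = (1-μ) * |z₁.2 - w₁.2| + μ * |z₂.2 - w₂.2| := by
        rw [abs_mul, abs_mul, abs_of_nonneg (by linarith : (0:ℝ) ≤ 1 - μ), abs_of_nonneg hμ0]
    _ ≤ (1-μ) * η + μ * η := by
        apply add_le_add
        · exact mul_le_mul_of_nonneg_left (le_of_lt (lt_of_le_of_lt hab1' hn₁)) (by linarith)
        · exact mul_le_mul_of_nonneg_left (le_of_lt (lt_of_le_of_lt hab2' hn₂)) hμ0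
    _ = η := by ring
  constructor
  · have := (abs_le.mp hc1).1
    linarith
  · have := (abs_le.mp hc2).1
    linarith


open RCLike in
private lemma claimF {𝕜 : Type*} [RCLike 𝕜] {X : Type*} [NormedAddCommGroup X]
    [NormedSpace ℝ X] [NormedSpace 𝕜 X] [IsScalarTower ℝ 𝕜 X]
    (hDP : DaugavetProperty 𝕜 X) (b : X) (hb : b ≠ 0)
    (g φ : X →L[𝕜] 𝕜) (a c η : ℝ) (hη : 0 < η)
    (hne : ∃ v, ‖v‖ ≤ 1 ∧ a < re (g v) ∧ c < re (φ v)) :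
    ∃ u : X, ‖u‖ ≤ 1 ∧ a < re (g u) ∧ c < re (φ u) ∧ ‖b‖ + 1 - η ≤ ‖b + u‖ := by
  obtain ⟨v₀, hv₀n, hv₀a, hv₀c⟩ := hne
  have hbpos : (0:ℝ) < ‖b‖ := norm_pos_iff.2 hb
  have hlin : ∀ (ψ : X →L[𝕜] 𝕜) (s t : ℝ) (z₁ z₂ : X),
      re (ψ (s • z₁ + t • z₂)) = s * re (ψ z₁) + t * re (ψ z₂) := by
    intro ψ s t z₁ z₂
    rw [RCLike.real_smul_eq_coe_smul (K := 𝕜) s z₁, RCLike.real_smul_eq_coe_smul (K := 𝕜) t z₂]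
    simp only [map_add, map_smul, smul_eq_mul, re_ofReal_mul]
  set Fm : X → ℝ × ℝ := fun z => (re (g z), re (φ z)) with hFm
  set Q : Set (ℝ × ℝ) := Fm '' {z : X | ‖z‖ ≤ 1} with hQ
  have hQconv : Convex ℝ Q := by
    rintro p ⟨z₁, hz₁, rfl⟩ q ⟨z₂, hz₂, rfl⟩ s t hs ht hst
    refine ⟨s • z₁ + t • z₂, ?_, ?_⟩
    · simp only [Set.mem_setOf_eq] at hz₁ hz₂ ⊢
      calc ‖s • z₁ + t • z₂‖ ≤ ‖s • z₁‖ + ‖t • z₂‖ := norm_add_le _ _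
      _ = s * ‖z₁‖ + t * ‖z₂‖ := by
          rw [norm_smul, norm_smul, Real.norm_of_nonneg hs, Real.norm_of_nonneg ht]
      _ ≤ s * 1 + t * 1 := by
          exact add_le_add (mul_le_mul_of_nonneg_left hz₁ hs) (mul_le_mul_of_nonneg_left hz₂ ht)
      _ = 1 := by rw [mul_one, mul_one, hst]
    · rw [hFm]
      simp only
      rw [hlin g s t z₁ z₂, hlin φ s t z₁ z₂]
      rw [Prod.smul_mk, Prod.smul_mk, Prod.mk_add_mk]
      simp [smul_eq_mul]
  have hQbd : Bornology.IsBounded Q := by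
    rw [isBounded_iff_forall_norm_le]
    refine ⟨‖g‖ + ‖φ‖, ?_⟩
    rintro p ⟨z, hz, rfl⟩
    simp only [Set.mem_setOf_eq] at hz
    rw [hFm]
    simp only
    rw [Prod.norm_def]
    apply max_le
    · calc ‖re (g z)‖ ≤ ‖g z‖ := norm_re_le_norm _
      _ ≤ ‖g‖ * ‖z‖ := g.le_opNorm z
      _ ≤ ‖g‖ + ‖φ‖ := by nlinarith [norm_nonneg g, norm_nonneg φ, g.opNorm_nonneg]
    · calc ‖re (φ z)‖ ≤ ‖φ z‖ := norm_re_le_norm _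
      _ ≤ ‖φ‖ * ‖z‖ := φ.le_opNorm z
      _ ≤ ‖g‖ + ‖φ‖ := by nlinarith [norm_nonneg g, norm_nonneg φ, φ.opNorm_nonneg]
  set K : Set (ℝ × ℝ) := closure Q with hKdef
  have hKcpt : IsCompact K := hQbd.isCompact_closure
  have hKconv : Convex ℝ K := hQconv.closure
  have hQK : Q ⊆ K := subset_closure
  have hvQ : Fm v₀ ∈ Q := ⟨v₀, hv₀n, rfl⟩
  obtain ⟨p₁, q₁, M₁, ρ₁, p₂, q₂, M₂, ρ₂, μ, hρ₁, hρ₂, hμ0, hμ1, hM₁ex, hM₁le, hM₂ex, hM₂le,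
    hfinal⟩ := twoD K hKcpt hKconv (Fm v₀) (hQK hvQ) a c hv₀a hv₀c
  -- helper to produce claimD witnesses
  have happrox : ∀ (p q M ρ : ℝ), 0 < ρ → (∃ zK ∈ K, p * zK.1 + q * zK.2 = M) →
      ∃ z : X, ‖z‖ ≤ 1 ∧ M - ρ < p * re (g z) + q * re (φ z) := by
    intro p q M ρ hρ hex
    obtain ⟨zK, hzKK, hzKM⟩ := hex
    have hzKcl : zK ∈ closure Q := hzKK
    rw [Metric.mem_closure_iff] at hzKcl
    obtain ⟨q', hq'Q, hq'd⟩ := hzKcl (ρ/(|p|+|q|+1)) (by positivity)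
    obtain ⟨z, hzn, hzq⟩ := hq'Q
    refine ⟨z, hzn, ?_⟩
    have h1 : |q'.1 - zK.1| ≤ dist zK q' := by
      rw [dist_comm, dist_eq_norm, ← Real.norm_eq_abs]
      exact le_trans (le_of_eq (by rw [Prod.fst_sub])) (norm_fst_le (q' - zK))
    have h2 : |q'.2 - zK.2| ≤ dist zK q' := by
      rw [dist_comm, dist_eq_norm, ← Real.norm_eq_abs]
      exact le_trans (le_of_eq (by rw [Prod.snd_sub])) (norm_snd_le (q' - zK))
    have hdiff : |p * q'.1 + q * q'.2 - (p * zK.1 + q * zK.2)| < ρ := by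
      calc |p * q'.1 + q * q'.2 - (p * zK.1 + q * zK.2)|
          = |p * (q'.1 - zK.1) + q * (q'.2 - zK.2)| := by ring_nf
      _ ≤ |p * (q'.1 - zK.1)| + |q * (q'.2 - zK.2)| := abs_add_le _ _
      _ = |p| * |q'.1 - zK.1| + |q| * |q'.2 - zK.2| := by rw [abs_mul, abs_mul]
      _ ≤ |p| * dist zK q' + |q| * dist zK q' := by
          exact add_le_add (mul_le_mul_of_nonneg_left h1 (abs_nonneg _))
            (mul_le_mul_of_nonneg_left h2 (abs_nonneg _))
      _ = (|p| + |q|) * dist zK q' := by ring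
      _ < ρ := by
          have hd0 : 0 ≤ dist zK q' := dist_nonneg
          have hstep : (|p|+|q|+1) * dist zK q' < (|p|+|q|+1) * (ρ/(|p|+|q|+1)) :=
            mul_lt_mul_of_pos_left hq'd (by positivity)
          have heq : (|p|+|q|+1) * (ρ/(|p|+|q|+1)) = ρ := by field_simp
          nlinarith
    have hq'z : q' = Fm z := hzq.symm
    rw [hq'z, hFm] at hdiff
    simp only at hdiff
    have := (abs_lt.mp hdiff).1
    rw [hzKM] at this
    linarith
  set η' : ℝ := min (η/2) (‖b‖/2) with hη'def
  have hη'0 : 0 < η' := lt_min (by linarith) (by linarith)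
  have hη'1 : η' ≤ η/2 := min_le_left _ _
  have hη'2 : η' ≤ ‖b‖/2 := min_le_right _ _
  set ψ₁ : X →L[𝕜] 𝕜 := ((p₁ : ℝ) : 𝕜) • g + ((q₁ : ℝ) : 𝕜) • φ with hψ₁
  set ψ₂ : X →L[𝕜] 𝕜 := ((p₂ : ℝ) : 𝕜) • g + ((q₂ : ℝ) : 𝕜) • φ with hψ₂
  have hψ₁re : ∀ z : X, re (ψ₁ z) = p₁ * re (g z) + q₁ * re (φ z) := by
    intro z
    rw [hψ₁]
    simp only [ContinuousLinearMap.add_apply, ContinuousLinearMap.smul_apply, smul_eq_mul,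
      map_add, re_ofReal_mul]
  have hψ₂re : ∀ z : X, re (ψ₂ z) = p₂ * re (g z) + q₂ * re (φ z) := by
    intro z
    rw [hψ₂]
    simp only [ContinuousLinearMap.add_apply, ContinuousLinearMap.smul_apply, smul_eq_mul,
      map_add, re_ofReal_mul]
  obtain ⟨w₁, hw₁n, hw₁τ, hw₁b⟩ := claimD hDP b hb ψ₁ (M₁ - ρ₁) η' hη'0 (by
    obtain ⟨z, hzn, hzlt⟩ := happrox p₁ q₁ M₁ ρ₁ hρ₁ hM₁ex
    exact ⟨z, hzn, by rw [hψ₁re]; exact hzlt⟩)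
  set b₂ : X := b + (1-μ) • w₁ with hb₂def
  have hb₂norm : ‖b‖ + (1-μ) - η' ≤ ‖b₂‖ := by
    have hsplit : b₂ = (b + w₁) + (-μ) • w₁ := by
      rw [hb₂def]; module
    have := norm_ge_sub (b + w₁) ((-μ) • w₁)
    rw [← hsplit] at this
    have hsm : ‖(-μ) • w₁‖ ≤ μ := by
      rw [norm_smul, Real.norm_eq_abs, abs_neg, abs_of_nonneg hμ0]
      nlinarith
    linarith
  have hb₂ne : b₂ ≠ 0 := by
    intro h
    rw [h, norm_zero] at hb₂norm
    have : (0:ℝ) ≤ 1 - μ := by linarith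
    linarith
  obtain ⟨w₂, hw₂n, hw₂τ, hw₂b⟩ := claimD hDP b₂ hb₂ne ψ₂ (M₂ - ρ₂) η' hη'0 (by
    obtain ⟨z, hzn, hzlt⟩ := happrox p₂ q₂ M₂ ρ₂ hρ₂ hM₂ex
    exact ⟨z, hzn, by rw [hψ₂re]; exact hzlt⟩)
  set u : X := (1-μ) • w₁ + μ • w₂ with hu
  have hun : ‖u‖ ≤ 1 := by
    calc ‖u‖ ≤ ‖(1-μ) • w₁‖ + ‖μ • w₂‖ := norm_add_le _ _
    _ = (1-μ) * ‖w₁‖ + μ * ‖w₂‖ := by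
        rw [norm_smul, norm_smul, Real.norm_of_nonneg (by linarith), Real.norm_of_nonneg hμ0]
    _ ≤ (1-μ) * 1 + μ * 1 := add_le_add
        (mul_le_mul_of_nonneg_left hw₁n (by linarith)) (mul_le_mul_of_nonneg_left hw₂n hμ0)
    _ = 1 := by ring
  have hbu : ‖b‖ + 1 - η ≤ ‖b + u‖ := by
    have hsplit : b + u = (b₂ + w₂) + (-(1-μ)) • w₂ := by
      rw [hu, hb₂def]; module
    have hlow := norm_ge_sub (b₂ + w₂) ((-(1-μ)) • w₂)
    rw [← hsplit] at hlow
    have hsm : ‖(-(1-μ)) • w₂‖ ≤ 1 - μ := by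
      rw [norm_smul, Real.norm_eq_abs, abs_neg, abs_of_nonneg (by linarith)]
      nlinarith
    linarith
  have hz₁K : Fm w₁ ∈ K := hQK ⟨w₁, hw₁n, rfl⟩
  have hz₂K : Fm w₂ ∈ K := hQK ⟨w₂, hw₂n, rfl⟩
  have hcoord := hfinal (Fm w₁) hz₁K (Fm w₂) hz₂K
    (by rw [hFm]; simp only; rw [← hψ₁re]; exact hw₁τ)
    (by rw [hFm]; simp only; rw [← hψ₂re]; exact hw₂τ)
  obtain ⟨hca, hcc⟩ := hcoord
  rw [hFm] at hca hcc
  simp only at hca hcc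
  refine ⟨u, hun, ?_, ?_, hbu⟩
  · rw [hu, hlin g (1-μ) μ w₁ w₂]
    exact hca
  · rw [hu, hlin φ (1-μ) μ w₁ w₂]
    exact hcc


/-- Let `X` be a Banach space with the Daugavet property, `Y` a Banach
space and `T : X → Y` a hereditary-SCD-operator (every convex subset of `T(B_X)` is an
SCD set). Then `T` is narrow: for all norm-one `x, y ∈ X`, every `ε > 0` and every slice
`S` of `B_X` containing `y`, there is `z ∈ S` with `‖x + z‖ ≥ 2 - ε` and
`‖T y - T z‖ < ε`. -/
theorem statement19 {𝕜 : Type*} [RCLike 𝕜] {X : Type*} [NormedAddCommGroup X]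
    [NormedSpace ℝ X] [NormedSpace 𝕜 X] [IsScalarTower ℝ 𝕜 X] [CompleteSpace X]
    {Y : Type*} [NormedAddCommGroup Y] [NormedSpace ℝ Y] [NormedSpace 𝕜 Y]
    [IsScalarTower ℝ 𝕜 Y] [CompleteSpace Y]
    (hDP : DaugavetProperty 𝕜 X) (T : X →L[𝕜] Y)
    (hher : ∀ C : Set Y, C ⊆ T '' Metric.closedBall (0 : X) 1 → Convex ℝ C → IsSCD 𝕜 C) :
    ∀ x y : X, ‖x‖ = 1 → ‖y‖ = 1 → ∀ ε : ℝ, 0 < ε →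
      ∀ (g : X →L[𝕜] 𝕜) (δ : ℝ), 0 < δ →
        y ∈ Slice 𝕜 (Metric.closedBall (0 : X) 1) g δ →
        ∃ z ∈ Slice 𝕜 (Metric.closedBall (0 : X) 1) g δ,
          2 - ε ≤ ‖x + z‖ ∧ ‖T y - T z‖ < ε := by
  intro x y hx hy ε hε g δ hδ hyS
  classical
  set B1 : Set X := Metric.closedBall (0 : X) 1 with hB1
  have hmemB1 : ∀ z : X, z ∈ B1 ↔ ‖z‖ ≤ 1 := by
    intro z; rw [hB1, Metric.mem_closedBall, dist_zero_right]
  set a : ℝ := sSup ((fun a => RCLike.re (g a)) '' B1) - δ with ha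
  set S' : Set X := Slice 𝕜 B1 g δ with hS'
  have hS'mem : ∀ z : X, z ∈ S' ↔ (‖z‖ ≤ 1 ∧ a < RCLike.re (g z)) := by
    intro z
    constructor
    · rintro ⟨h1, h2⟩; exact ⟨(hmemB1 z).mp h1, h2⟩
    · rintro ⟨h1, h2⟩; exact ⟨(hmemB1 z).mpr h1, h2⟩
  have hlin : ∀ (ψ : X →L[𝕜] 𝕜) (s t : ℝ) (z₁ z₂ : X),
      RCLike.re (ψ (s • z₁ + t • z₂)) = s * RCLike.re (ψ z₁) + t * RCLike.re (ψ z₂) := by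
    intro ψ s t z₁ z₂
    rw [RCLike.real_smul_eq_coe_smul (K := 𝕜) s z₁, RCLike.real_smul_eq_coe_smul (K := 𝕜) t z₂]
    simp only [map_add, map_smul, smul_eq_mul, RCLike.re_ofReal_mul]
  have hcomb : ∀ (r₁ r₂ s t : ℝ), a < r₁ → a < r₂ → 0 ≤ s → 0 ≤ t → s + t = 1 →
      a < s * r₁ + t * r₂ := by
    intro r₁ r₂ s t h₁ h₂ hs ht hst
    rcases eq_or_lt_of_le hs with h | h
    · have ht1 : t = 1 := by linarith
      rw [← h, ht1]; simpa using h₂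
    · have haa : s*a + t*a = a := by rw [← add_mul, hst, one_mul]
      nlinarith [mul_pos h (sub_pos.mpr h₁), mul_nonneg ht (sub_nonneg.mpr (le_of_lt h₂)), haa]
  have hS'conv : Convex ℝ S' := by
    intro z₁ h₁ z₂ h₂ s t hs ht hst
    rw [hS'mem] at h₁ h₂ ⊢
    obtain ⟨h₁n, h₁a⟩ := h₁
    obtain ⟨h₂n, h₂a⟩ := h₂
    constructor
    · calc ‖s • z₁ + t • z₂‖ ≤ ‖s • z₁‖ + ‖t • z₂‖ := norm_add_le _ _
      _ = s * ‖z₁‖ + t * ‖z₂‖ := by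
          rw [norm_smul, norm_smul, Real.norm_of_nonneg hs, Real.norm_of_nonneg ht]
      _ ≤ s * 1 + t * 1 :=
          add_le_add (mul_le_mul_of_nonneg_left h₁n hs) (mul_le_mul_of_nonneg_left h₂n ht)
      _ = 1 := by rw [mul_one, mul_one, hst]
    · rw [hlin g s t z₁ z₂]
      exact hcomb _ _ s t h₁a h₂a hs ht hst
  have hySmem : y ∈ S' := hyS
  set C : Set Y := T '' S' with hC
  have hS'B1 : S' ⊆ B1 := fun z hz => hz.1
  have hCsub : C ⊆ T '' Metric.closedBall (0 : X) 1 := Set.image_mono hS'B1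
  have hCconv : Convex ℝ C := by
    intro p hp q hq s t hs ht hst
    obtain ⟨z₁, hz₁, rfl⟩ := hp
    obtain ⟨z₂, hz₂, rfl⟩ := hq
    refine ⟨s • z₁ + t • z₂, hS'conv hz₁ hz₂ hs ht hst, ?_⟩
    rw [map_add, RCLike.real_smul_eq_coe_smul (K := 𝕜) s z₁,
      RCLike.real_smul_eq_coe_smul (K := 𝕜) t z₂, map_smul, map_smul,
      ← RCLike.real_smul_eq_coe_smul (K := 𝕜) s (T z₁),
      ← RCLike.real_smul_eq_coe_smul (K := 𝕜) t (T z₂)]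
  have hTyC : T y ∈ C := ⟨y, hySmem, rfl⟩
  obtain ⟨Ss, hslices, hdetm⟩ := hher C hCsub hCconv
  choose h β hβ hSeq using hslices
  set c : ℕ → ℝ := fun n => sSup ((fun w => RCLike.re ((h n) w)) '' C) - β n with hc
  have hSsmem : ∀ (n : ℕ) (w : Y), w ∈ Ss n ↔ (w ∈ C ∧ c n < RCLike.re ((h n) w)) := by
    intro n w
    rw [hSeq n]
    constructor
    · rintro ⟨h1, h2⟩; exact ⟨h1, h2⟩
    · rintro ⟨h1, h2⟩; exact ⟨h1, h2⟩
  have hVne : ∀ n, ∃ v : X, ‖v‖ ≤ 1 ∧ a < RCLike.re (g v) ∧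
      c n < RCLike.re (((h n).comp T) v) := by
    intro n
    have hnem : ((fun w => RCLike.re ((h n) w)) '' C).Nonempty := ⟨_, ⟨T y, hTyC, rfl⟩⟩
    have hbdd : BddAbove ((fun w => RCLike.re ((h n) w)) '' C) := by
      refine ⟨‖h n‖ * ‖T‖, ?_⟩
      rintro p ⟨w, hwC, rfl⟩
      obtain ⟨z, hzS, rfl⟩ := hwC
      have hz1 : ‖z‖ ≤ 1 := ((hS'mem z).mp hzS).1
      calc RCLike.re ((h n) (T z)) ≤ ‖(h n) (T z)‖ :=
            le_trans (le_abs_self _) (RCLike.abs_re_le_norm _)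
      _ ≤ ‖h n‖ * ‖T z‖ := (h n).le_opNorm _
      _ ≤ ‖h n‖ * (‖T‖ * ‖z‖) := mul_le_mul_of_nonneg_left (T.le_opNorm z) (norm_nonneg _)
      _ ≤ ‖h n‖ * ‖T‖ := by
          have h1 : ‖T‖ * ‖z‖ ≤ ‖T‖ := by
            calc ‖T‖ * ‖z‖ ≤ ‖T‖ * 1 := mul_le_mul_of_nonneg_left hz1 (norm_nonneg _)
            _ = ‖T‖ := mul_one _
          exact mul_le_mul_of_nonneg_left h1 (norm_nonneg _)
    have hlt : c n < sSup ((fun w => RCLike.re ((h n) w)) '' C) := by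
      have hrfl : c n = sSup ((fun w => RCLike.re ((h n) w)) '' C) - β n := rfl
      rw [hrfl]; linarith [hβ n]
    obtain ⟨p, hp, hplt⟩ := exists_lt_of_lt_csSup hnem hlt
    obtain ⟨w, hwC, rfl⟩ := hp
    obtain ⟨z, hzS, rfl⟩ := hwC
    obtain ⟨hz1, hz2⟩ := (hS'mem z).mp hzS
    exact ⟨z, hz1, hz2, by rw [ContinuousLinearMap.comp_apply]; exact hplt⟩
  set ε₀ : ℝ := min ε 1 / 4 with hε₀def
  have hε₀pos : 0 < ε₀ := by
    rw [hε₀def]; have := lt_min hε one_pos; positivity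
  have hε₀le : ε₀ ≤ 1/4 := by
    rw [hε₀def]; have := min_le_right ε 1; linarith
  have hε₀ε : 4 * ε₀ ≤ ε := by
    rw [hε₀def]; have := min_le_left ε 1; linarith
  have step : ∀ (b : X) (n : ℕ), ∃ w : X, ‖w‖ ≤ 1 ∧ a < RCLike.re (g w) ∧
      c n < RCLike.re ((h n) (T w)) ∧
      (b ≠ 0 → ‖b‖ + 1 - ε₀ * (1/2)^(n+1) ≤ ‖b + w‖) := by
    intro b n
    by_cases hb : b = 0
    · obtain ⟨v, h1, h2, h3⟩ := hVne n
      exact ⟨v, h1, h2, by rw [← ContinuousLinearMap.comp_apply]; exact h3,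
        fun hcon => absurd hb hcon⟩
    · obtain ⟨w, h1, h2, h3, h4⟩ := claimF hDP b hb g ((h n).comp T) a (c n)
        (ε₀ * (1/2)^(n+1)) (by positivity) (hVne n)
      exact ⟨w, h1, h2, by rw [← ContinuousLinearMap.comp_apply]; exact h3, fun _ => h4⟩
  choose FF hF1 hF2 hF3 hF4 using step
  set s : ℕ → X := fun n => Nat.rec x (fun k sk => sk + FF sk k) n with hsdef
  set u : ℕ → X := fun n => FF (s n) n with hu
  have hs0 : s 0 = x := rfl
  have hssucc : ∀ n, s (n+1) = s n + u n := fun n => rfl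
  have hsnorm : ∀ n : ℕ, (n : ℝ) + 1 - ε₀ + ε₀ * (1/2)^n ≤ ‖s n‖ := by
    intro n
    induction n with
    | zero => rw [hs0, hx]; norm_num
    | succ n ih =>
      have hne : s n ≠ 0 := by
        intro h0
        rw [h0, norm_zero] at ih
        have hn0 : (0:ℝ) ≤ (n:ℝ) := Nat.cast_nonneg n
        have hp : (0:ℝ) < (1/2)^n := by positivity
        nlinarith
      have h4 := hF4 (s n) n hne
      rw [hssucc n]
      have hpow : (1/2:ℝ)^(n+1) = (1/2)^n * (1/2) := pow_succ _ _
      push_cast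
      push_cast at ih
      nlinarith [h4]
  have hsne : ∀ n, s n ≠ 0 := by
    intro n h0
    have := hsnorm n
    rw [h0, norm_zero] at this
    have hn0 : (0:ℝ) ≤ (n:ℝ) := Nat.cast_nonneg n
    have hp : (0:ℝ) < (1/2)^n := by positivity
    nlinarith
  have huS' : ∀ n, u n ∈ S' := fun n => (hS'mem _).mpr ⟨hF1 _ _, hF2 _ _⟩
  have hTuSs : ∀ n, T (u n) ∈ Ss n := fun n =>
    (hSsmem n _).mpr ⟨⟨u n, huS' n, rfl⟩, hF3 _ _⟩
  have hBsub : T '' Set.range u ⊆ C := by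
    rintro _ ⟨_, ⟨n, rfl⟩, rfl⟩
    exact ⟨u n, huS' n, rfl⟩
  have hhits : ∀ n, ((T '' Set.range u) ∩ Ss n).Nonempty := fun n =>
    ⟨T (u n), ⟨u n, ⟨n, rfl⟩, rfl⟩, hTuSs n⟩
  have hTycl : T y ∈ closure (convexHull ℝ (T '' Set.range u)) :=
    hdetm _ hBsub hhits hTyC
  have himg : convexHull ℝ (T '' Set.range u) = T '' (convexHull ℝ (Set.range u)) := by
    have hh := (T.restrictScalars ℝ).toLinearMap.image_convexHull (Set.range u)
    simpa using hh.symm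
  rw [himg, Metric.mem_closure_iff] at hTycl
  obtain ⟨p, hpmem, hpd⟩ := hTycl ε₀ hε₀pos
  obtain ⟨w', hw'hull, rfl⟩ := hpmem
  have hTyw : ‖T y - T w'‖ < ε₀ := by rw [← dist_eq_norm]; exact hpd
  have hw'S' : w' ∈ S' :=
    convexHull_min (by rintro _ ⟨n, rfl⟩; exact huS' n) hS'conv hw'hull
  -- finite convex representation
  rw [convexHull_eq] at hw'hull
  obtain ⟨ι, t, wt, zf, hwt0, hwt1, hzf, hcm⟩ := hw'hull
  have hzfu : ∀ i : ι, ∃ m : ℕ, i ∈ t → u m = zf i := by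
    intro i
    by_cases hi : i ∈ t
    · obtain ⟨m, hm⟩ := hzf i hi
      exact ⟨m, fun _ => hm⟩
    · exact ⟨0, fun hcon => absurd hcon hi⟩
  choose k hk using hzfu
  set N : ℕ := t.sup k with hN
  have hkN : ∀ i ∈ t, k i ≤ N := fun i hi => Finset.le_sup hi
  set sN : X := s (N+1) with hsN
  have hsNnorm : (N : ℝ) + 2 - ε₀ ≤ ‖sN‖ := by
    have := hsnorm (N+1)
    have hp : (0:ℝ) < (1/2)^(N+1) := by positivity
    push_cast at this ⊢
    nlinarith [mul_pos hε₀pos hp]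
  have hsNne : sN ≠ 0 := hsne (N+1)
  obtain ⟨f, hf1, hfx⟩ := exists_dual_vector 𝕜 sN (norm_ne_zero_iff.mpr hsNne)
  have hres : RCLike.re (f sN) = ‖sN‖ := by rw [hfx]; exact RCLike.ofReal_re _
  have hssum : ∀ n : ℕ, s n = x + ∑ i ∈ Finset.range n, u i := by
    intro n
    induction n with
    | zero => simp [hs0]
    | succ n ih => rw [hssucc, ih, Finset.sum_range_succ]; abel
  have hfsum : RCLike.re (f x) + ∑ i ∈ Finset.range (N+1), RCLike.re (f (u i)) = ‖sN‖ := by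
    rw [← hres]
    have h1 : f sN = f x + ∑ i ∈ Finset.range (N+1), f (u i) := by
      rw [hsN, hssum (N+1), map_add, map_sum]
    rw [h1, map_add, map_sum]
  have hb1 : ∀ z : X, ‖z‖ ≤ 1 → RCLike.re (f z) ≤ 1 := by
    intro z hz
    calc RCLike.re (f z) ≤ ‖f z‖ := le_trans (le_abs_self _) (RCLike.abs_re_le_norm _)
    _ ≤ ‖f‖ * ‖z‖ := f.le_opNorm z
    _ ≤ 1 := by rw [hf1, one_mul]; exact hz
  have hbu1 : ∀ i : ℕ, RCLike.re (f (u i)) ≤ 1 := fun i => hb1 _ (hF1 _ _)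
  have hsumub : ∑ i ∈ Finset.range (N+1), RCLike.re (f (u i)) ≤ (N:ℝ) + 1 := by
    calc ∑ i ∈ Finset.range (N+1), RCLike.re (f (u i))
        ≤ ∑ _i ∈ Finset.range (N+1), (1:ℝ) := Finset.sum_le_sum (fun i _ => hbu1 i)
    _ = (N:ℝ) + 1 := by rw [Finset.sum_const, Finset.card_range]; push_cast; ring
  have hfx1 : 1 - ε₀ ≤ RCLike.re (f x) := by linarith
  have hterm : ∀ j ∈ Finset.range (N+1), 1 - ε₀ ≤ RCLike.re (f (u j)) := by
    intro j hj
    have hsplit := Finset.add_sum_erase (Finset.range (N+1)) (fun i => RCLike.re (f (u i))) hj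
    have herase : ∑ i ∈ (Finset.range (N+1)).erase j, RCLike.re (f (u i)) ≤ (N:ℝ) := by
      calc ∑ i ∈ (Finset.range (N+1)).erase j, RCLike.re (f (u i))
          ≤ ∑ _i ∈ (Finset.range (N+1)).erase j, (1:ℝ) :=
            Finset.sum_le_sum (fun i _ => hbu1 i)
      _ = (N:ℝ) := by
          rw [Finset.sum_const, Finset.card_erase_of_mem hj, Finset.card_range]
          push_cast; ring
    have hfxle : RCLike.re (f x) ≤ 1 := hb1 x (le_of_eq hx)
    linarith
  have hcm' : w' = ∑ i ∈ t, wt i • zf i := by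
    rw [← hcm, Finset.centerMass_eq_of_sum_1 _ _ hwt1]
  have hrew' : RCLike.re (f w') = ∑ i ∈ t, wt i * RCLike.re (f (zf i)) := by
    rw [hcm', map_sum, map_sum]
    refine Finset.sum_congr rfl (fun i _ => ?_)
    rw [RCLike.real_smul_eq_coe_smul (K := 𝕜), map_smul, smul_eq_mul, RCLike.re_ofReal_mul]
  have hrew'ge : 1 - ε₀ ≤ RCLike.re (f w') := by
    rw [hrew']
    calc (1:ℝ) - ε₀ = ∑ i ∈ t, wt i * (1 - ε₀) := by rw [← Finset.sum_mul, hwt1, one_mul]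
    _ ≤ ∑ i ∈ t, wt i * RCLike.re (f (zf i)) := by
        refine Finset.sum_le_sum (fun i hi => ?_)
        refine mul_le_mul_of_nonneg_left ?_ (hwt0 i hi)
        rw [← hk i hi]
        exact hterm (k i) (Finset.mem_range.mpr (Nat.lt_succ_of_le (hkN i hi)))
  have hxw : 2 - ε ≤ ‖x + w'‖ := by
    have h1 : RCLike.re (f (x + w')) ≤ ‖x + w'‖ := by
      calc RCLike.re (f (x + w')) ≤ ‖f (x + w')‖ :=
            le_trans (le_abs_self _) (RCLike.abs_re_le_norm _)
      _ ≤ ‖f‖ * ‖x + w'‖ := f.le_opNorm _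
      _ = ‖x + w'‖ := by rw [hf1, one_mul]
    have h2 : RCLike.re (f (x + w')) = RCLike.re (f x) + RCLike.re (f w') := by
      rw [map_add, map_add]
    linarith
  exact ⟨w', hw'S', hxw, lt_of_lt_of_le hTyw (by linarith)⟩
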